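/- arXiv:1210.5685 — 3 statements merged into one kernel-verified Lean document; each statement's English description precedes it below -/
import Mathlib

section
/- For every real number δ with 0 < δ ≤ 1/2, the inequality ∫₀^{π/2} (1 + δ·ξ(θ))^{−1/2} dθ ≥ (π/2)·(1 − δ)^{−1/2} holds. -/
open Real Set Filter Topology

/-- The test function ξ(θ) = (cos²θ + 2θ·sinθ·cosθ + θ² − π²/4)/cos²θ. -/
noncomputable def xi (θ : ℝ) : ℝ :=
  (Real.cos θ ^ 2 + 2 * θ * Real.sin θ * Real.cos θ + θ ^ 2 - Real.pi ^ 2 / 4) /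
    Real.cos θ ^ 2

/-!
The map `t ↦ t^(-1/2)` is convex, so it lies above its tangent line at `1 - δ`; integrating,
the integral is at least `(π/2)(1 - δ)^(-1/2)` minus a multiple of `∫₀^{π/2} (ξ + 1)`, and this
integral vanishes because `ξ` has the primitive `θ + (θ² - π²/4) tan θ`, which tends to `-π/2`
at `π/2`. The tangent line may be used because `1 + δξ` stays positive: `ξ ≥ 1 - π²/4`, as
`(π²/4) cos²θ + 2θ sin θ cos θ + θ²` equals `π²/4` at both ends of `[0, π/2]` and in between
first increases and then decreases, its derivative having the sign of
`2 - (π²/4 - 1) tan θ / θ`.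
-/

open MeasureTheory intervalIntegral

lemma cos_pos_of_mem_Ioo_zero_pi_div_two {x : ℝ} (hx : x ∈ Ioo 0 (π / 2)) : 0 < cos x :=
  cos_pos_of_mem_Ioo ⟨by linarith [hx.1, pi_pos], hx.2⟩

lemma hasDerivAt_tan_div_self {x : ℝ} (hx : cos x ≠ 0) (hx0 : x ≠ 0) :
    HasDerivAt (fun x => tan x / x) ((x - sin x * cos x) / (x ^ 2 * cos x ^ 2)) x := by
  refine ((hasDerivAt_tan hx).div (hasDerivAt_id x) hx0).congr_deriv ?_
  rw [tan_eq_sin_div_cos, id]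
  field_simp

lemma tan_div_self_monotoneOn : MonotoneOn (fun x => tan x / x) (Ioo 0 (π / 2)) := by
  set f' := fun x => (x - sin x * cos x) / (x ^ 2 * cos x ^ 2)
  have hderiv : ∀ x ∈ Ioo 0 (π / 2), HasDerivAt (fun x => tan x / x) (f' x) x := fun x hx =>
    hasDerivAt_tan_div_self (cos_pos_of_mem_Ioo_zero_pi_div_two hx).ne' hx.1.ne'
  refine monotoneOn_of_hasDerivWithinAt_nonneg (f' := f') (convex_Ioo _ _)
    (HasDerivAt.continuousOn hderiv) (fun x hx => ?_) fun x hx => ?_ <;>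
    rw [interior_Ioo] at hx
  · exact (hderiv x hx).hasDerivWithinAt
  · have hsc : sin x * cos x ≤ x := by
      linarith [sin_le (by linarith [hx.1] : (0 : ℝ) ≤ 2 * x), sin_two_mul x]
    exact div_nonneg (by linarith) (by positivity)

noncomputable def xiShiftedNum (c θ : ℝ) : ℝ := (1 + c) * cos θ ^ 2 + 2 * θ * sin θ * cos θ + θ ^ 2

lemma xi_add_eq {c θ : ℝ} (hθ : cos θ ≠ 0) :
    xi θ + c = (xiShiftedNum c θ - π ^ 2 / 4) / cos θ ^ 2 := by
  rw [xi, xiShiftedNum]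
  field_simp
  ring

@[simp]
lemma xiShiftedNum_zero (c : ℝ) : xiShiftedNum c 0 = 1 + c := by
  simp [xiShiftedNum]

@[simp]
lemma xiShiftedNum_pi_div_two (c : ℝ) : xiShiftedNum c (π / 2) = π ^ 2 / 4 := by
  rw [xiShiftedNum, cos_pi_div_two, sin_pi_div_two]
  ring

lemma hasDerivAt_xiShiftedNum (c x : ℝ) :
    HasDerivAt (xiShiftedNum c) (2 * cos x * (2 * x * cos x - c * sin x)) x := by
  have := ((((hasDerivAt_cos x).pow 2).const_mul (1 + c)).add
    ((((hasDerivAt_id x).const_mul 2).mul (hasDerivAt_sin x)).mul (hasDerivAt_cos x))).add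
    (hasDerivAt_pow 2 x)
  refine this.congr_deriv ?_
  simp only [id, Pi.mul_apply]
  linear_combination (-2 * x) * sin_sq_add_cos_sq x

lemma hasDerivAt_xiShiftedNum_of_mem_Ioo {c x : ℝ} (hx : x ∈ Ioo 0 (π / 2)) :
    HasDerivAt (xiShiftedNum c) (2 * x * cos x ^ 2 * (2 - c * (tan x / x))) x := by
  have hcos : cos x ≠ 0 := (cos_pos_of_mem_Ioo_zero_pi_div_two hx).ne'
  refine (hasDerivAt_xiShiftedNum c x).congr_deriv ?_
  rw [tan_eq_sin_div_cos]
  field_simp [hx.1.ne']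

lemma min_le_xiShiftedNum {c θ : ℝ} (hc : 0 < c) (hθ : θ ∈ Icc 0 (π / 2)) :
    min (1 + c) (π ^ 2 / 4) ≤ xiShiftedNum c θ := by
  have hcont : ContinuousOn (xiShiftedNum c) (Icc 0 (π / 2)) :=
    HasDerivAt.continuousOn fun x _ => hasDerivAt_xiShiftedNum c x
  rcases hθ.1.eq_or_lt with rfl | h0
  · simp
  rcases hθ.2.eq_or_lt with rfl | h1
  · simp
  have hθ' : θ ∈ Ioo 0 (π / 2) := ⟨h0, h1⟩
  set f' := fun x => 2 * x * cos x ^ 2 * (2 - c * (tan x / x))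
  have hf'_nonneg : ∀ x ∈ Ioo 0 (π / 2), c * (tan x / x) ≤ 2 → 0 ≤ f' x := fun x hx h =>
    mul_nonneg (by have := hx.1; positivity) (by linarith)
  have hf'_nonpos : ∀ x ∈ Ioo 0 (π / 2), 2 ≤ c * (tan x / x) → f' x ≤ 0 := fun x hx h =>
    mul_nonpos_of_nonneg_of_nonpos (by have := hx.1; positivity) (by linarith)
  rcases le_total (c * (tan θ / θ)) 2 with hle | hge
  · have hmono : MonotoneOn (xiShiftedNum c) (Icc 0 θ) := by
      refine monotoneOn_of_hasDerivWithinAt_nonneg (f' := f') (convex_Icc _ _)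
        (hcont.mono (Icc_subset_Icc_right h1.le)) (fun x hx => ?_) fun x hx => ?_ <;>
        rw [interior_Icc] at hx <;> have hx' : x ∈ Ioo 0 (π / 2) := ⟨hx.1, hx.2.trans h1⟩
      · exact (hasDerivAt_xiShiftedNum_of_mem_Ioo hx').hasDerivWithinAt
      · refine hf'_nonneg x hx' (le_trans ?_ hle)
        exact mul_le_mul_of_nonneg_left (tan_div_self_monotoneOn hx' hθ' hx.2.le) hc.le
    calc min (1 + c) (π ^ 2 / 4) ≤ xiShiftedNum c 0 := by simp
      _ ≤ xiShiftedNum c θ := hmono (left_mem_Icc.2 h0.le) (right_mem_Icc.2 h0.le) h0.le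
  · have hanti : AntitoneOn (xiShiftedNum c) (Icc θ (π / 2)) := by
      refine antitoneOn_of_hasDerivWithinAt_nonpos (f' := f') (convex_Icc _ _)
        (hcont.mono (Icc_subset_Icc_left h0.le)) (fun x hx => ?_) fun x hx => ?_ <;>
        rw [interior_Icc] at hx <;> have hx' : x ∈ Ioo 0 (π / 2) := ⟨h0.trans hx.1, hx.2⟩
      · exact (hasDerivAt_xiShiftedNum_of_mem_Ioo hx').hasDerivWithinAt
      · refine hf'_nonpos x hx' (le_trans hge ?_)
        exact mul_le_mul_of_nonneg_left (tan_div_self_monotoneOn hθ' hx' hx.1.le) hc.le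
    calc min (1 + c) (π ^ 2 / 4) ≤ xiShiftedNum c (π / 2) := by simp
      _ ≤ xiShiftedNum c θ := hanti (left_mem_Icc.2 h1.le) (right_mem_Icc.2 h1.le) h1.le

lemma one_sub_pi_sq_div_four_le_xi {θ : ℝ} (hθ : θ ∈ Icc 0 (π / 2)) : 1 - π ^ 2 / 4 ≤ xi θ := by
  have hπ : 4 < π ^ 2 := by nlinarith [pi_gt_three]
  rcases hθ.2.eq_or_lt with rfl | h1
  · rw [xi, cos_pi_div_two, zero_pow two_ne_zero, div_zero]
    linarith
  have hcos : 0 < cos θ := cos_pos_of_mem_Ioo ⟨by linarith [hθ.1, pi_pos], h1⟩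
  have hc : (0 : ℝ) < π ^ 2 / 4 - 1 := by linarith
  have hmin := min_le_xiShiftedNum hc hθ
  rw [add_sub_cancel, min_self] at hmin
  have hshift : 0 ≤ xi θ + (π ^ 2 / 4 - 1) := by
    rw [xi_add_eq hcos.ne']
    exact div_nonneg (by linarith) (by positivity)
  linarith

/-- The primitive `b + (b² - π²/4) tan b` of `ξ`, rewritten through
`cos b = (π/2 - b) sinc (π/2 - b)` so that it is continuous at `π/2`. -/
noncomputable def xiPrimitive (b : ℝ) : ℝ := b - (b + π / 2) * sin b / sinc (π / 2 - b)

lemma xiPrimitive_eq {b : ℝ} (hb : cos b ≠ 0) :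
    xiPrimitive b = b + (b ^ 2 - π ^ 2 / 4) * tan b := by
  have hb' : π / 2 - b ≠ 0 := by
    rintro h
    rw [show b = π / 2 by linarith, cos_pi_div_two] at hb
    exact hb rfl
  rw [xiPrimitive, sinc_of_ne_zero hb', sin_pi_div_two_sub, tan_eq_sin_div_cos]
  field_simp
  ring

lemma hasDerivAt_xiPrimitive {x : ℝ} (hx : cos x ≠ 0) : HasDerivAt xiPrimitive (xi x) x := by
  have hF : HasDerivAt (fun b => b + (b ^ 2 - π ^ 2 / 4) * tan b) (xi x) x := by
    refine ((hasDerivAt_id x).add (((hasDerivAt_pow 2 x).sub_const _).mul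
      (hasDerivAt_tan hx))).congr_deriv ?_
    rw [xi, tan_eq_sin_div_cos]
    field_simp
    ring
  refine hF.congr_of_eventuallyEq ?_
  filter_upwards [continuous_cos.continuousAt.eventually_ne hx] with b hb using xiPrimitive_eq hb

lemma continuousOn_xiPrimitive : ContinuousOn xiPrimitive (Icc 0 (π / 2)) := by
  refine continuousOn_id.sub (ContinuousOn.div (by fun_prop) (by fun_prop) fun b hb => ?_)
  rcases (sub_nonneg.2 hb.2).eq_or_lt with h | h
  · rw [← h, sinc_zero]; exact one_ne_zero
  · rw [sinc_of_ne_zero h.ne']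
    exact (div_pos (sin_pos_of_pos_of_lt_pi h (by linarith [hb.1, pi_pos])) h).ne'

lemma xiPrimitive_zero : xiPrimitive 0 = 0 := by simp [xiPrimitive]

lemma xiPrimitive_pi_div_two : xiPrimitive (π / 2) = -(π / 2) := by
  rw [xiPrimitive, add_halves, sin_pi_div_two, sub_self, sinc_zero]
  ring

lemma intervalIntegrable_xi : IntervalIntegrable xi volume 0 (π / 2) := by
  have h0 : (0 : ℝ) ≤ π / 2 := by positivity
  have hshift : IntervalIntegrable (fun θ => xi θ + (π ^ 2 / 4 - 1)) volume 0 (π / 2) := by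
    refine intervalIntegrable_deriv_of_nonneg (g := fun b => xiPrimitive b + (π ^ 2 / 4 - 1) * b)
      ?_ (fun x hx => ?_) fun x hx => ?_
    · rw [uIcc_of_le h0]
      exact continuousOn_xiPrimitive.add (by fun_prop)
    all_goals rw [min_eq_left h0, max_eq_right h0] at hx
    · exact ((hasDerivAt_xiPrimitive (cos_pos_of_mem_Ioo_zero_pi_div_two hx).ne').add
        ((hasDerivAt_id x).const_mul (π ^ 2 / 4 - 1))).congr_deriv (by ring)
    · linarith [one_sub_pi_sq_div_four_le_xi (Ioo_subset_Icc_self hx)]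
  convert hshift.sub (intervalIntegrable_const (c := π ^ 2 / 4 - 1)) using 1
  simp

lemma integral_xi : ∫ θ in (0 : ℝ)..(π / 2), xi θ = -(π / 2) := by
  rw [integral_eq_sub_of_hasDerivAt_of_le (by positivity) continuousOn_xiPrimitive
    (fun x hx => hasDerivAt_xiPrimitive (cos_pos_of_mem_Ioo_zero_pi_div_two hx).ne')
    intervalIntegrable_xi, xiPrimitive_zero, xiPrimitive_pi_div_two, sub_zero]

lemma integral_xi_add_one : ∫ θ in (0 : ℝ)..(π / 2), (xi θ + 1) = 0 := by
  rw [integral_add intervalIntegrable_xi intervalIntegrable_const, integral_xi,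
    intervalIntegral.integral_const, smul_eq_mul, mul_one, sub_zero, neg_add_cancel]

@[fun_prop]
lemma measurable_xi : Measurable xi := by
  unfold xi
  fun_prop

lemma three_div_two_sub_pi_sq_div_eight_le {δ θ : ℝ} (hδ0 : 0 ≤ δ) (hδ1 : δ ≤ 1 / 2)
    (hθ : θ ∈ Icc 0 (π / 2)) : 3 / 2 - π ^ 2 / 8 ≤ 1 + δ * xi θ := by
  nlinarith [mul_le_mul_of_nonneg_left (one_sub_pi_sq_div_four_le_xi hθ) hδ0,
    mul_nonneg (sub_nonneg.2 hδ1) (by nlinarith [pi_gt_three] : (0 : ℝ) ≤ π ^ 2 / 4 - 1)]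

lemma rpow_neg_half_eq_inv_sqrt {x : ℝ} (hx : 0 ≤ x) : x ^ (-(1 : ℝ) / 2) = (√x)⁻¹ := by
  rw [neg_div, rpow_neg hx, ← sqrt_eq_rpow]

lemma rpow_neg_half_tangent_le {a x : ℝ} (ha : 0 < a) (hx : 0 < x) :
    a ^ (-(1 : ℝ) / 2) * (1 - (x - a) / (2 * a)) ≤ x ^ (-(1 : ℝ) / 2) := by
  obtain ⟨u, hu, rfl⟩ : ∃ u, 0 < u ∧ x = u ^ 2 := ⟨√x, sqrt_pos.2 hx, (sq_sqrt hx.le).symm⟩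
  obtain ⟨b, hb, rfl⟩ : ∃ b, 0 < b ∧ a = b ^ 2 := ⟨√a, sqrt_pos.2 ha, (sq_sqrt ha.le).symm⟩
  rw [rpow_neg_half_eq_inv_sqrt (sq_nonneg u), rpow_neg_half_eq_inv_sqrt (sq_nonneg b),
    sqrt_sq hu.le, sqrt_sq hb.le, ← sub_nonneg]
  have hfactor : u⁻¹ - b⁻¹ * (1 - (u ^ 2 - b ^ 2) / (2 * b ^ 2)) =
      (u - b) ^ 2 * (u + 2 * b) / (2 * b ^ 3 * u) := by
    field_simp
    ring
  rw [hfactor]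
  positivity

lemma intervalIntegrable_rpow_of_le {f : ℝ → ℝ} {a b m p : ℝ} (hf : Measurable f) (hm : 0 < m)
    (hmf : ∀ x ∈ uIcc a b, m ≤ f x) (hp : p ≤ 0) :
    IntervalIntegrable (fun x => f x ^ p) volume a b := by
  refine (intervalIntegrable_const (c := m ^ p)).mono_fun'
    (hf.pow_const p).aestronglyMeasurable ?_
  rw [EventuallyLE, ae_restrict_iff' measurableSet_uIoc]
  filter_upwards with x hx
  have hfx := hmf x (uIoc_subset_uIcc hx)
  rw [norm_of_nonneg (rpow_nonneg (hm.le.trans hfx) p)]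
  exact rpow_le_rpow_of_nonpos hm hfx hp

theorem z_inv_sqrt_integral_half (δ : ℝ) (hδ0 : 0 < δ) (hδ1 : δ ≤ 1 / 2) :
    ∫ θ in (0 : ℝ)..(Real.pi / 2), (1 + δ * xi θ) ^ (-(1 : ℝ) / 2) ≥
      Real.pi / 2 * (1 - δ) ^ (-(1 : ℝ) / 2) := by
  have hm : 0 < 3 / 2 - π ^ 2 / 8 := by nlinarith [pi_lt_d2, pi_pos]
  have ha : 0 < 1 - δ := by linarith
  have hbase : ∀ θ ∈ uIcc 0 (π / 2), 3 / 2 - π ^ 2 / 8 ≤ 1 + δ * xi θ := fun θ hθ =>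
    three_div_two_sub_pi_sq_div_eight_le hδ0.le hδ1
      (by rwa [uIcc_of_le (by positivity)] at hθ)
  set c := (1 - δ) ^ (-(1 : ℝ) / 2)
  have htangent : ∀ θ, c * (1 - ((1 + δ * xi θ) - (1 - δ)) / (2 * (1 - δ))) =
      c - c * δ / (2 * (1 - δ)) * (xi θ + 1) := fun θ => by ring
  have hxi : IntervalIntegrable (fun θ => xi θ + 1) volume 0 (π / 2) :=
    intervalIntegrable_xi.add intervalIntegrable_const
  calc π / 2 * c = ∫ θ in (0 : ℝ)..(π / 2), (c - c * δ / (2 * (1 - δ)) * (xi θ + 1)) := by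
        rw [integral_sub intervalIntegrable_const (hxi.const_mul _),
          intervalIntegral.integral_const_mul, integral_xi_add_one, intervalIntegral.integral_const]
        simp [mul_comm]
    _ ≤ ∫ θ in (0 : ℝ)..(π / 2), (1 + δ * xi θ) ^ (-(1 : ℝ) / 2) := by
        refine integral_mono_on (by positivity)
          (intervalIntegrable_const.sub (hxi.const_mul _)) (intervalIntegrable_rpow_of_le
          (by fun_prop) hm hbase (by norm_num)) fun θ hθ => ?_
        rw [← htangent]
        exact rpow_neg_half_tangent_le ha (by linarith [hbase θ (Icc_subset_uIcc hθ)])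
end

section
/- Let δ be a real number with δ > 0 and define z(θ) = 1 + δ·ξ(θ). Then z is strictly monotone decreasing on (−π/2, 0) and strictly monotone increasing on (0, π/2); in particular z attains its minimum value 1 + δ·(1 − π²/4) on (−π/2, π/2) exactly at θ = 0. -/
/-!
ξ is even and ξ'(θ) = 2 N(θ) / cos³θ with N(θ) = 2θ cos θ + sin θ (cos²θ + θ² − π²/4), so it
suffices that N > 0 on (0, π/2). The quotient N / sin has derivative
2 cos²θ (sin θ cos θ − θ) / sin²θ < 0 there and vanishes at π/2, hence it is positive on (0, π/2).
-/

open Real Set Filter Topology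

noncomputable def xiNumerator (θ : ℝ) : ℝ :=
  2 * θ * cos θ + sin θ * (cos θ ^ 2 + θ ^ 2 - π ^ 2 / 4)

lemma sin_mul_cos_lt_self {x : ℝ} (hx : 0 < x) : sin x * cos x < x := by
  have h := sin_lt (by positivity : 0 < 2 * x)
  rw [sin_two_mul] at h
  linarith

lemma hasDerivAt_xiNumerator (θ : ℝ) :
    HasDerivAt xiNumerator
      (2 * cos θ - 2 * θ * sin θ + cos θ * (cos θ ^ 2 + θ ^ 2 - π ^ 2 / 4)
        + sin θ * (2 * θ - 2 * cos θ * sin θ)) θ := by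
  have h := (((hasDerivAt_id' θ).const_mul 2).fun_mul (hasDerivAt_cos θ)).fun_add
    ((hasDerivAt_sin θ).fun_mul ((((hasDerivAt_cos θ).fun_pow 2).fun_add
      ((hasDerivAt_id' θ).fun_pow 2)).sub_const (π ^ 2 / 4)))
  exact h.congr_deriv (by push_cast; ring)

lemma hasDerivAt_xiNumerator_div_sin {θ : ℝ} (hs : sin θ ≠ 0) :
    HasDerivAt (fun x => xiNumerator x / sin x)
      (2 * cos θ ^ 2 * (sin θ * cos θ - θ) / sin θ ^ 2) θ := by
  refine ((hasDerivAt_xiNumerator θ).div (hasDerivAt_sin θ) hs).congr_deriv ?_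
  rw [xiNumerator]
  field_simp
  linear_combination (-8 * sin θ * cos θ) * sin_sq_add_cos_sq θ

lemma strictAntiOn_xiNumerator_div_sin :
    StrictAntiOn (fun x => xiNumerator x / sin x) (Ioc 0 (π / 2)) := by
  have hsin : ∀ x ∈ Ioc 0 (π / 2), 0 < sin x := fun x hx =>
    sin_pos_of_pos_of_lt_pi hx.1 (by linarith [hx.2, pi_pos])
  have hderiv : ∀ x ∈ Ioc 0 (π / 2), HasDerivAt (fun x => xiNumerator x / sin x)
      (2 * cos x ^ 2 * (sin x * cos x - x) / sin x ^ 2) x := fun x hx =>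
    hasDerivAt_xiNumerator_div_sin (hsin x hx).ne'
  refine strictAntiOn_of_hasDerivWithinAt_neg (convex_Ioc 0 (π / 2))
    (fun x hx => (hderiv x hx).continuousAt.continuousWithinAt)
    (f' := fun x => 2 * cos x ^ 2 * (sin x * cos x - x) / sin x ^ 2) (fun x hx => ?_)
    (fun x hx => ?_)
  all_goals rw [interior_Ioc] at hx
  · exact (hderiv x (Ioo_subset_Ioc_self hx)).hasDerivWithinAt
  · have hcos : 0 < cos x := cos_pos_of_mem_Ioo ⟨by linarith [hx.1, pi_pos], hx.2⟩
    have hsin_pos := hsin x (Ioo_subset_Ioc_self hx)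
    have hlt := sin_mul_cos_lt_self hx.1
    exact div_neg_of_neg_of_pos (mul_neg_of_pos_of_neg (by positivity) (by linarith))
      (by positivity)

lemma xiNumerator_pos {θ : ℝ} (h0 : 0 < θ) (h1 : θ < π / 2) : 0 < xiNumerator θ := by
  have hs : 0 < sin θ := sin_pos_of_pos_of_lt_pi h0 (by linarith [pi_pos])
  have key : 0 < xiNumerator θ / sin θ :=
    calc 0 = xiNumerator (π / 2) / sin (π / 2) := by simp [xiNumerator]; ring
      _ < xiNumerator θ / sin θ :=
        strictAntiOn_xiNumerator_div_sin ⟨h0, h1.le⟩ ⟨by positivity, le_rfl⟩ h1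
  exact (div_pos_iff_of_pos_right hs).1 key

lemma hasDerivAt_xi {θ : ℝ} (hc : cos θ ≠ 0) :
    HasDerivAt xi (2 * xiNumerator θ / cos θ ^ 3) θ := by
  have hN := ((((hasDerivAt_cos θ).fun_pow 2).fun_add
    ((((hasDerivAt_id' θ).const_mul 2).fun_mul (hasDerivAt_sin θ)).fun_mul
      (hasDerivAt_cos θ))).fun_add ((hasDerivAt_id' θ).fun_pow 2)).sub_const (π ^ 2 / 4)
  refine (hN.div ((hasDerivAt_cos θ).fun_pow 2) (pow_ne_zero 2 hc)).congr_deriv ?_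
  rw [xiNumerator]
  norm_num
  field_simp
  linear_combination (4 * θ * cos θ) * sin_sq_add_cos_sq θ

lemma xi_neg (θ : ℝ) : xi (-θ) = xi θ := by
  simp only [xi, sin_neg, cos_neg]
  ring

lemma xi_zero : xi 0 = 1 - π ^ 2 / 4 := by
  simp [xi]

lemma strictMonoOn_xi : StrictMonoOn xi (Ico 0 (π / 2)) := by
  have hcos : ∀ x ∈ Ico 0 (π / 2), 0 < cos x := fun x hx =>
    cos_pos_of_mem_Ioo ⟨by linarith [hx.1, pi_pos], hx.2⟩
  have hderiv : ∀ x ∈ Ico 0 (π / 2), HasDerivAt xi (2 * xiNumerator x / cos x ^ 3) x :=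
    fun x hx => hasDerivAt_xi (hcos x hx).ne'
  refine strictMonoOn_of_hasDerivWithinAt_pos (convex_Ico 0 (π / 2))
    (fun x hx => (hderiv x hx).continuousAt.continuousWithinAt)
    (f' := fun x => 2 * xiNumerator x / cos x ^ 3) (fun x hx => ?_) (fun x hx => ?_)
  all_goals rw [interior_Ico] at hx
  · exact (hderiv x (Ioo_subset_Ico_self hx)).hasDerivWithinAt
  · have hcos_pos := hcos x (Ioo_subset_Ico_self hx)
    have hN := xiNumerator_pos hx.1 hx.2
    positivity

lemma strictAntiOn_xi : StrictAntiOn xi (Ioc (-(π / 2)) 0) := by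
  intro a ha b hb hab
  rw [← xi_neg a, ← xi_neg b]
  exact strictMonoOn_xi ⟨neg_nonneg.2 hb.2, neg_lt.1 hb.1⟩ ⟨neg_nonneg.2 ha.2, neg_lt.1 ha.1⟩
    (neg_lt_neg hab)

theorem z_monotonicity_and_min (δ : ℝ) (hδ : 0 < δ) :
    StrictAntiOn (fun θ => 1 + δ * xi θ) (Set.Ioo (-(Real.pi / 2)) (0 : ℝ)) ∧
    StrictMonoOn (fun θ => 1 + δ * xi θ) (Set.Ioo (0 : ℝ) (Real.pi / 2)) ∧
    1 + δ * xi 0 = 1 + δ * (1 - Real.pi ^ 2 / 4) ∧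
    (∀ θ ∈ Set.Ioo (-(Real.pi / 2)) (Real.pi / 2),
      θ ≠ 0 → 1 + δ * xi 0 < 1 + δ * xi θ) := by
  have hz {a b : ℝ} (h : xi a < xi b) : 1 + δ * xi a < 1 + δ * xi b := by gcongr
  refine ⟨fun a ha b hb hab => hz (strictAntiOn_xi (Ioo_subset_Ioc_self ha)
      (Ioo_subset_Ioc_self hb) hab),
    fun a ha b hb hab => hz (strictMonoOn_xi (Ioo_subset_Ico_self ha)
      (Ioo_subset_Ico_self hb) hab), by rw [xi_zero], fun θ hθ hne => hz ?_⟩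
  have hπ := pi_pos
  rcases hne.lt_or_gt with hneg | hpos
  · exact strictAntiOn_xi ⟨hθ.1, hneg.le⟩ ⟨by linarith, le_rfl⟩ hneg
  · exact strictMonoOn_xi ⟨le_rfl, by linarith⟩ ⟨hpos.le, hθ.2⟩ hpos
end

section
/- Let δ be a real number with 0 ≤ δ ≤ 1/2 and define z(θ) = 1 + δ·ξ(θ). Then for every θ in (−π/2, π/2), z(θ) ≤ 1, and z(θ) tends to 1 as θ tends to π/2 from the left. -/
open Real Set Filter Topology

/-! Write `ξ = N / cos²`. The numerator `N` has derivative `4θ cos²θ`, so it is even, increasing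
on `[0, ∞)` and vanishes at `π/2`; hence `N ≤ 0` on `[-π/2, π/2]`, and so `ξ ≤ 0` there.
At `π/2` both `N` and `cos²` vanish, and l'Hôpital's rule gives
`N' / (cos²)' = -2θ cos θ / sin θ → 0`. -/

noncomputable def xiNum (θ : ℝ) : ℝ :=
  cos θ ^ 2 + 2 * θ * sin θ * cos θ + θ ^ 2 - π ^ 2 / 4

lemma hasDerivAt_cos_sq (θ : ℝ) :
    HasDerivAt (fun x => cos x ^ 2) (-2 * sin θ * cos θ) θ :=
  ((hasDerivAt_cos θ).pow 2).congr_deriv (by ring)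

lemma hasDerivAt_xiNum (θ : ℝ) : HasDerivAt xiNum (4 * θ * cos θ ^ 2) θ := by
  have hlin : HasDerivAt (fun x : ℝ => 2 * x) 2 θ := by
    simpa using (hasDerivAt_id θ).const_mul (2 : ℝ)
  have hsq : HasDerivAt (fun x : ℝ => x ^ 2) (2 * θ) θ := by
    simpa using hasDerivAt_pow 2 θ
  refine ((((hasDerivAt_cos_sq θ).add ((hlin.mul (hasDerivAt_sin θ)).mul
    (hasDerivAt_cos θ))).add hsq).sub_const (π ^ 2 / 4)).congr_deriv ?_
  simp only [Pi.mul_apply]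
  linear_combination (-(2 * θ)) * sin_sq_add_cos_sq θ

lemma xiNum_neg (θ : ℝ) : xiNum (-θ) = xiNum θ := by
  simp only [xiNum, cos_neg, sin_neg]
  ring

lemma xiNum_pi_div_two : xiNum (π / 2) = 0 := by
  simp only [xiNum, cos_pi_div_two, sin_pi_div_two]
  ring

lemma monotoneOn_xiNum : MonotoneOn xiNum (Ici 0) := by
  refine monotoneOn_of_hasDerivWithinAt_nonneg (convex_Ici 0)
    (fun x _ => (hasDerivAt_xiNum x).continuousAt.continuousWithinAt)
    (fun x _ => (hasDerivAt_xiNum x).hasDerivWithinAt) fun x hx => ?_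
  rw [interior_Ici] at hx
  have hx : 0 < x := hx
  positivity

lemma xiNum_nonpos {θ : ℝ} (hθ : |θ| ≤ π / 2) : xiNum θ ≤ 0 := by
  have habs : xiNum |θ| = xiNum θ := by
    rcases abs_choice θ with h | h <;> rw [h]
    exact xiNum_neg θ
  rw [← habs, ← xiNum_pi_div_two]
  exact monotoneOn_xiNum (abs_nonneg θ) (by simp only [mem_Ici]; positivity) hθ

lemma xi_nonpos {θ : ℝ} (hθ : θ ∈ Ioo (-(π / 2)) (π / 2)) : xi θ ≤ 0 :=
  div_nonpos_of_nonpos_of_nonneg (xiNum_nonpos (abs_le.2 ⟨hθ.1.le, hθ.2.le⟩)) (sq_nonneg _)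

lemma tendsto_xi_nhdsLT_pi_div_two : Tendsto xi (𝓝[<] (π / 2)) (𝓝 0) := by
  have hsin_cos : ∀ᶠ x in 𝓝[<] (π / 2), 0 < sin x ∧ 0 < cos x := by
    filter_upwards [Ioo_mem_nhdsLT (half_pos pi_pos)] with x hx
    exact ⟨sin_pos_of_pos_of_lt_pi hx.1 (by linarith [hx.2, pi_pos]),
      cos_pos_of_mem_Ioo ⟨by linarith [hx.1, pi_pos], hx.2⟩⟩
  have hNum : Tendsto xiNum (𝓝[<] (π / 2)) (𝓝 0) := by
    simpa only [xiNum_pi_div_two] using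
      (hasDerivAt_xiNum (π / 2)).continuousAt.tendsto.mono_left nhdsWithin_le_nhds
  have hDen : Tendsto (fun x => cos x ^ 2) (𝓝[<] (π / 2)) (𝓝 0) := by
    simpa only [cos_pi_div_two, ne_eq, OfNat.ofNat_ne_zero, not_false_eq_true, zero_pow] using
      (hasDerivAt_cos_sq (π / 2)).continuousAt.tendsto.mono_left nhdsWithin_le_nhds
  have hratio : Tendsto (fun x => -(2 * x * cos x) / sin x) (𝓝[<] (π / 2)) (𝓝 0) := by
    have hcont : ContinuousAt (fun x => -(2 * x * cos x) / sin x) (π / 2) :=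
      by fun_prop (disch := simp only [sin_pi_div_two]; norm_num)
    simpa only [cos_pi_div_two, mul_zero, neg_zero, zero_div] using
      hcont.tendsto.mono_left nhdsWithin_le_nhds
  refine HasDerivAt.lhopital_zero_nhdsLT (.of_forall hasDerivAt_xiNum)
    (.of_forall hasDerivAt_cos_sq) ?_ hNum hDen (hratio.congr' ?_)
  · filter_upwards [hsin_cos] with x ⟨hs, hc⟩
    have : 0 < sin x * cos x := mul_pos hs hc
    linarith
  · filter_upwards [hsin_cos] with x ⟨hs, hc⟩
    field_simp
    ring

theorem z_le_one_and_limit_general (δ : ℝ) (hδ0 : 0 ≤ δ) :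
    (∀ θ ∈ Set.Ioo (-(Real.pi / 2)) (Real.pi / 2), 1 + δ * xi θ ≤ 1) ∧
    Filter.Tendsto (fun θ => 1 + δ * xi θ)
      (nhdsWithin (Real.pi / 2) (Set.Iio (Real.pi / 2))) (nhds 1) := by
  refine ⟨fun θ hθ => ?_, ?_⟩
  · linarith [mul_nonpos_of_nonneg_of_nonpos hδ0 (xi_nonpos hθ)]
  · simpa using (tendsto_xi_nhdsLT_pi_div_two.const_mul δ).const_add 1

theorem z_le_one_and_limit (δ : ℝ) (hδ0 : 0 ≤ δ) (hδ1 : δ ≤ 1 / 2) :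
    (∀ θ ∈ Set.Ioo (-(Real.pi / 2)) (Real.pi / 2), 1 + δ * xi θ ≤ 1) ∧
    Filter.Tendsto (fun θ => 1 + δ * xi θ)
      (nhdsWithin (Real.pi / 2) (Set.Iio (Real.pi / 2))) (nhds 1) :=
  z_le_one_and_limit_general δ hδ0
end
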